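/- If A is invertible and AΓA⁻¹ ⊆ Γ for a splitting crystal group Γ, then Q̃_{[s,t]}(AγA⁻¹) = A_{[s]} Q̃_{[s,t]}(γ) A_{[t]}^{−1} for every γ ∈ Γ. -/

import Mathlib

open scoped BigOperators
open Finset MeasureTheory

noncomputable section

/-- The vector `X_[s](x)` of all degree-`s` monomials of `x ∈ ℂ^d`, indexed by
multisets of size `s` over `Fin d` (i.e. `Sym (Fin d) s`). -/
def Xvec (d s : ℕ) (x : Fin d → ℂ) : Sym (Fin d) s → ℂ :=
  fun m => (Multiset.map x (m : Multiset (Fin d))).prod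

/-- `X_[s]` applied to a real vector. -/
def XvecR (d s : ℕ) (x : Fin d → ℝ) : Sym (Fin d) s → ℂ :=
  Xvec d s fun i => (x i : ℂ)

/-- `Mt` is the matrix `M_[t]` induced by `M` on degree-`t` monomials, i.e.
`X_[t](Mx) = M_[t] X_[t](x)` for all `x`. -/
def IsMonMat (d t : ℕ) (M : Matrix (Fin d) (Fin d) ℝ)
    (Mt : Matrix (Sym (Fin d) t) (Sym (Fin d) t) ℂ) : Prop :=
  ∀ x : Fin d → ℝ, XvecR d t (M.mulVec x) = Mt.mulVec (XvecR d t x)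

/-- `Q` is the family of matrices `Q_[s,t](y)` defined by the expansion
`X_[s](x - y) = ∑_{t=0}^{s} Q_[s,t](y) X_[t](x)`. -/
def IsQfam (d : ℕ)
    (Q : (s : ℕ) → (t : ℕ) → (Fin d → ℝ) → Matrix (Sym (Fin d) s) (Sym (Fin d) t) ℂ) : Prop :=
  ∀ (s : ℕ) (y x : Fin d → ℝ),
    XvecR d s (x - y) = ∑ t ∈ Finset.range (s + 1), (Q s t y).mulVec (XvecR d t x)

/-- A complex square matrix is expansive if all of its eigenvalues (roots of the
characteristic polynomial) have modulus strictly greater than `1`. -/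
def ExpansiveC {n : Type*} [Fintype n] [DecidableEq n] (M : Matrix n n ℂ) : Prop :=
  ∀ μ : ℂ, M.charpoly.IsRoot μ → 1 < ‖μ‖

/-- A real square matrix is expansive if all of its complex eigenvalues have
modulus strictly greater than `1`. -/
def ExpansiveR {n : Type*} [Fintype n] [DecidableEq n] (M : Matrix n n ℝ) : Prop :=
  ExpansiveC (M.map (algebraMap ℝ ℂ))

/-- Elements of a splitting crystal group `Γ = G ⋉ Λ`, written as pairs
`γ = (b, l)` with `b` a matrix (the point part) and `l` a vector. -/
abbrev CrystElem (d : ℕ) := Matrix (Fin d) (Fin d) ℝ × (Fin d → ℝ)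

/-- The action `γ(x) = b(x + l)` of `γ = (b, l)`. -/
def crystAct {d : ℕ} (γ : CrystElem d) (x : Fin d → ℝ) : Fin d → ℝ :=
  γ.1.mulVec (x + γ.2)

/-- The product `(b₂,l₂)·(b₁,l₁) = (b₂b₁, l₁ + b₁⁻¹ l₂)` (composition of the actions). -/
def crystMul {d : ℕ} (γ₂ γ₁ : CrystElem d) : CrystElem d :=
  (γ₂.1 * γ₁.1, γ₁.2 + (γ₁.1)⁻¹.mulVec γ₂.2)

/-- The inverse `(b,l)⁻¹ = (b⁻¹, -b l)`. -/
def crystInv {d : ℕ} (γ : CrystElem d) : CrystElem d :=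
  ((γ.1)⁻¹, -(γ.1.mulVec γ.2))

/-- Conjugation by an invertible matrix `A`:
`A (b,l) A⁻¹ = (A b A⁻¹, (A b A⁻¹)⁻¹ (A b l))`. -/
def crystConj {d : ℕ} (A : Matrix (Fin d) (Fin d) ℝ) (γ : CrystElem d) : CrystElem d :=
  (A * γ.1 * A⁻¹, (A * γ.1 * A⁻¹)⁻¹.mulVec ((A * γ.1).mulVec γ.2))

/-- `(G, Λ)` are the data of a splitting crystal group `Γ = G ⋉ Λ`: `G` is a
finite group of orthogonal matrices and `Λ` is a full-rank lattice preserved by `G`. -/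
def IsSplittingCrystal (d : ℕ) (G : Finset (Matrix (Fin d) (Fin d) ℝ))
    (Λ : Set (Fin d → ℝ)) : Prop :=
  (1 : Matrix (Fin d) (Fin d) ℝ) ∈ G ∧
  (∀ b ∈ G, ∀ b' ∈ G, b * b' ∈ G) ∧
  (∀ b ∈ G, b⁻¹ ∈ G) ∧
  (∀ b ∈ G, b * b.transpose = 1) ∧
  (∃ R : Matrix (Fin d) (Fin d) ℝ, IsUnit R.det ∧
      Λ = {v | ∃ k : Fin d → ℤ, v = R.mulVec fun i => (k i : ℝ)}) ∧
  (∀ b ∈ G, ∀ l ∈ Λ, b.mulVec l ∈ Λ)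

/-- The underlying set of `Γ = G ⋉ Λ`. -/
def crystSet {d : ℕ} (G : Finset (Matrix (Fin d) (Fin d) ℝ)) (Λ : Set (Fin d → ℝ)) :
    Set (CrystElem d) := {γ | γ.1 ∈ G ∧ γ.2 ∈ Λ}

/-- `A` is a `Γ`-admissible matrix: expansive and `AΓA⁻¹ ⊆ Γ`. -/
def IsAdmissible {d : ℕ} (G : Finset (Matrix (Fin d) (Fin d) ℝ)) (Λ : Set (Fin d → ℝ))
    (A : Matrix (Fin d) (Fin d) ℝ) : Prop :=
  ExpansiveR A ∧ ∀ γ ∈ crystSet G Λ, crystConj A γ ∈ crystSet G Λ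

/-! Real monomials are linearly independent over `ℂ`, so a matrix `M_[t]` is determined by
`X_[t](Mx) = M_[t] X_[t](x)`, and coefficients of `∑_t Q_[s,t](y) X_[t](x)` can be compared degree
by degree. Conjugation by `A` sends `l` to `A l`, and `A_[t] b_[t] A_[t]⁻¹` is the monomial matrix
of `A b A⁻¹`. Substituting `x ↦ A x`, `y ↦ A y` in the expansion of `X_[s](x - y)` gives
`Q_[s,t](A l) A_[t] = A_[s] Q_[s,t](l)`, and the theorem follows. -/

open Matrix

namespace MvPolynomial

theorem eval_monomial_toFinsupp {σ R : Type*} [CommSemiring R] [DecidableEq σ] (f : σ → R)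
    (m : Multiset σ) : eval f (monomial (Multiset.toFinsupp m) 1) = (m.map f).prod := by
  rw [eval_monomial, one_mul, Finsupp.prod, Finset.prod_multiset_map_count]
  simp [Multiset.toFinsupp_apply]

theorem eval_ofReal_injective (σ : Type*) :
    Function.Injective fun (p : MvPolynomial σ ℂ) (x : σ → ℝ) => eval (fun i => (x i : ℂ)) p := by
  intro p q h
  refine funext_set (fun _ => Set.range ((↑) : ℝ → ℂ))
    (fun _ => Set.infinite_range_of_injective Complex.ofReal_injective) fun x hx => ?_
  choose y hy using fun i => hx i trivial
  obtain rfl : (fun i => (y i : ℂ)) = x := _root_.funext hy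
  exact congrFun h y

end MvPolynomial

theorem XvecR_eq_eval {d t : ℕ} (x : Fin d → ℝ) (m : Sym (Fin d) t) :
    XvecR d t x m = MvPolynomial.eval (fun i => (x i : ℂ))
      (MvPolynomial.monomial (Multiset.toFinsupp (m : Multiset (Fin d))) 1) := by
  rw [MvPolynomial.eval_monomial_toFinsupp]
  rfl

theorem linearIndependent_XvecR (d : ℕ) :
    LinearIndependent ℂ fun (p : Σ u, Sym (Fin d) u) (x : Fin d → ℝ) => XvecR d p.1 x p.2 := by
  let E : MvPolynomial (Fin d) ℂ →ₗ[ℂ] (Fin d → ℝ) → ℂ :=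
    LinearMap.pi fun x => (MvPolynomial.aeval fun i => (x i : ℂ)).toLinearMap
  have hmono : Function.Injective fun p : Σ u, Sym (Fin d) u =>
      Multiset.toFinsupp (p.2 : Multiset (Fin d)) := by
    intro p q h
    have h2 : (p.2 : Multiset (Fin d)) = q.2 := Multiset.toFinsupp.injective h
    exact Sigma.subtype_ext (by simpa using congrArg Multiset.card h2) h2
  have hv : (fun (p : Σ u, Sym (Fin d) u) (x : Fin d → ℝ) => XvecR d p.1 x p.2) =
      E ∘ MvPolynomial.basisMonomials (Fin d) ℂ ∘
        fun p => Multiset.toFinsupp (p.2 : Multiset (Fin d)) := by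
    funext p x
    simp [E, XvecR_eq_eval, MvPolynomial.coe_basisMonomials]
  rw [hv]
  exact ((MvPolynomial.basisMonomials (Fin d) ℂ).linearIndependent.comp _ hmono).map'
    E (LinearMap.ker_eq_bot.mpr (MvPolynomial.eval_ofReal_injective (Fin d)))

variable {d : ℕ}

theorem eq_zero_of_forall_dotProduct_XvecR {t : ℕ} {c : Sym (Fin d) t → ℂ}
    (h : ∀ x, c ⬝ᵥ XvecR d t x = 0) : c = 0 := by
  have hli := (linearIndependent_XvecR d).comp (Sigma.mk t) sigma_mk_injective
  funext m
  refine Fintype.linearIndependent_iff.mp hli c (funext fun x => ?_) m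
  simpa [Finset.sum_apply, dotProduct, mul_comm] using h x

theorem Matrix.eq_of_forall_mulVec_XvecR {n : Type*} [Fintype n] {t : ℕ}
    {M N : Matrix n (Sym (Fin d) t) ℂ} (h : ∀ x, M *ᵥ XvecR d t x = N *ᵥ XvecR d t x) :
    M = N := by
  rw [← sub_eq_zero]
  ext p m
  have hrow : (M - N) p = 0 :=
    eq_zero_of_forall_dotProduct_XvecR fun x => by
      rw [show (M - N) p = M p - N p from rfl, sub_dotProduct, sub_eq_zero]
      exact congrFun (h x) p
  exact congrFun hrow m

theorem eq_zero_of_forall_sum_mulVec_XvecR {n : Type*} [Fintype n] {S : Finset ℕ}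
    {D : (u : ℕ) → Matrix n (Sym (Fin d) u) ℂ}
    (h : ∀ x, ∑ u ∈ S, D u *ᵥ XvecR d u x = 0) : ∀ u ∈ S, D u = 0 := by
  intro u hu
  ext p m
  refine linearIndependent_iff'.mp (linearIndependent_XvecR d) (S.sigma fun _ => Finset.univ)
    (fun q => D q.1 p q.2) (funext fun x => ?_) ⟨u, m⟩
    (Finset.mem_sigma.mpr ⟨hu, Finset.mem_univ m⟩)
  simpa [Finset.sum_sigma, Finset.sum_apply, mulVec, dotProduct] using congrFun (h x) p

namespace IsMonMat

variable {t : ℕ} {M N : Matrix (Fin d) (Fin d) ℝ}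
  {Mt Nt : Matrix (Sym (Fin d) t) (Sym (Fin d) t) ℂ}

theorem unique {Mt' : Matrix (Sym (Fin d) t) (Sym (Fin d) t) ℂ}
    (h : IsMonMat d t M Mt) (h' : IsMonMat d t M Mt') : Mt = Mt' :=
  Matrix.eq_of_forall_mulVec_XvecR fun x => by rw [← h x, ← h' x]

theorem mul (hM : IsMonMat d t M Mt) (hN : IsMonMat d t N Nt) :
    IsMonMat d t (M * N) (Mt * Nt) := by
  intro x
  rw [← mulVec_mulVec, ← mulVec_mulVec, ← hN x, ← hM]

theorem isUnit_det (hM : IsMonMat d t M Mt) (hdet : IsUnit M.det) : IsUnit Mt.det := by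
  rw [isUnit_iff_ne_zero, Ne, ← exists_vecMul_eq_zero_iff]
  rintro ⟨v, hv, hvMt⟩
  refine hv (eq_zero_of_forall_dotProduct_XvecR fun y => ?_)
  have hy : M *ᵥ (M⁻¹ *ᵥ y) = y := by
    rw [mulVec_mulVec, mul_nonsing_inv _ hdet, one_mulVec]
  rw [← hy, hM, dotProduct_mulVec, hvMt, zero_dotProduct]

theorem eq_conj {Ct : Matrix (Sym (Fin d) t) (Sym (Fin d) t) ℂ}
    (hC : IsMonMat d t (M * N * M⁻¹) Ct) (hdet : IsUnit M.det) (hM : IsMonMat d t M Mt)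
    (hN : IsMonMat d t N Nt) :
    Ct = Mt * Nt * Mt⁻¹ := by
  have hCM : Ct * Mt = Mt * Nt := by
    refine (hC.mul hM).unique ?_
    rw [Matrix.mul_assoc, nonsing_inv_mul _ hdet, Matrix.mul_one]
    exact hM.mul hN
  rw [← hCM, Matrix.mul_assoc, mul_nonsing_inv _ (hM.isUnit_det hdet), Matrix.mul_one]

end IsMonMat

theorem IsQfam.apply_mulVec_mul
    {Q : (s : ℕ) → (t : ℕ) → (Fin d → ℝ) → Matrix (Sym (Fin d) s) (Sym (Fin d) t) ℂ}
    (hQ : IsQfam d Q) {A : Matrix (Fin d) (Fin d) ℝ}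
    {Am : (u : ℕ) → Matrix (Sym (Fin d) u) (Sym (Fin d) u) ℂ} (hAm : ∀ u, IsMonMat d u A (Am u))
    {s t : ℕ} (ht : t ≤ s) (l : Fin d → ℝ) :
    Q s t (A *ᵥ l) * Am t = Am s * Q s t l := by
  rw [← sub_eq_zero]
  refine eq_zero_of_forall_sum_mulVec_XvecR (S := Finset.range (s + 1))
    (D := fun u => Q s u (A *ᵥ l) * Am u - Am s * Q s u l) (fun x => ?_) t
    (Finset.mem_range_succ_iff.mpr ht)
  have hAx : ∀ u, XvecR d u (A *ᵥ x) = Am u *ᵥ XvecR d u x := fun u => hAm u x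
  calc ∑ u ∈ Finset.range (s + 1), (Q s u (A *ᵥ l) * Am u - Am s * Q s u l) *ᵥ XvecR d u x
      = ∑ u ∈ Finset.range (s + 1), Q s u (A *ᵥ l) *ᵥ XvecR d u (A *ᵥ x) -
          Am s *ᵥ ∑ u ∈ Finset.range (s + 1), Q s u l *ᵥ XvecR d u x := by
        simp only [sub_mulVec, Finset.sum_sub_distrib, ← mulVec_mulVec, mulVec_sum, hAx]
    _ = XvecR d s (A *ᵥ x - A *ᵥ l) - Am s *ᵥ XvecR d s (x - l) := by rw [hQ, hQ]
    _ = 0 := by rw [← mulVec_sub, hAm, sub_self]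

theorem crystConj_snd {A b : Matrix (Fin d) (Fin d) ℝ} (hA : IsUnit A.det) (hb : IsUnit b.det)
    (l : Fin d → ℝ) : (crystConj A (b, l)).2 = A *ᵥ l := by
  have hconj : IsUnit (A * b * A⁻¹).det := by
    simp only [det_mul]
    exact (hA.mul hb).mul (isUnit_nonsing_inv_det A hA)
  calc (crystConj A (b, l)).2 = ((A * b * A⁻¹)⁻¹ * (A * b * A⁻¹) * A) *ᵥ l := by
        show (A * b * A⁻¹)⁻¹ *ᵥ (A * b) *ᵥ l = _
        rw [mulVec_mulVec, Matrix.mul_assoc _ (A * b * A⁻¹) A, Matrix.mul_assoc (A * b) A⁻¹ A,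
          nonsing_inv_mul _ hA, Matrix.mul_one]
    _ = A *ᵥ l := by rw [nonsing_inv_mul _ hconj, Matrix.one_mul]

theorem IsSplittingCrystal.isUnit_det {G : Finset (Matrix (Fin d) (Fin d) ℝ)}
    {Λ : Set (Fin d → ℝ)} (hcr : IsSplittingCrystal d G Λ) {γ : CrystElem d}
    (hγ : γ ∈ crystSet G Λ) :
    IsUnit γ.1.det := by
  obtain ⟨-, -, -, horthogonal, -⟩ := hcr
  exact isUnit_det_of_right_inverse (horthogonal γ.1 hγ.1)

theorem Qtilde_conj_general (d s t : ℕ) (ht : t ≤ s)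
    (G : Finset (Matrix (Fin d) (Fin d) ℝ)) (Λ : Set (Fin d → ℝ))
    (hcr : IsSplittingCrystal d G Λ)
    (Q : (s : ℕ) → (t : ℕ) → (Fin d → ℝ) → Matrix (Sym (Fin d) s) (Sym (Fin d) t) ℂ)
    (hQ : IsQfam d Q)
    (A : Matrix (Fin d) (Fin d) ℝ) (hA : IsUnit A.det)
    (b : Matrix (Fin d) (Fin d) ℝ) (l : Fin d → ℝ)
    (hγ : ((b, l) : CrystElem d) ∈ crystSet G Λ)
    (bm b'm : (u : ℕ) → Matrix (Sym (Fin d) u) (Sym (Fin d) u) ℂ)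
    (hbm : ∀ u, IsMonMat d u b (bm u))
    (hb'm : ∀ u, IsMonMat d u (crystConj A (b, l)).1 (b'm u))
    (Am : (u : ℕ) → Matrix (Sym (Fin d) u) (Sym (Fin d) u) ℂ)
    (hAm : ∀ u, IsMonMat d u A (Am u)) :
    Q s t (crystConj A (b, l)).2 * (b'm t)⁻¹ =
      Am s * (Q s t l * (bm t)⁻¹) * (Am t)⁻¹ := by
  have hb : IsUnit b.det := hcr.isUnit_det hγ
  rw [crystConj_snd hA hb, (hb'm t).eq_conj hA (hAm t) (hbm t), Matrix.mul_inv_rev,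
    Matrix.mul_inv_rev, nonsing_inv_nonsing_inv _ ((hAm t).isUnit_det hA), ← Matrix.mul_assoc,
    ← Matrix.mul_assoc, hQ.apply_mulVec_mul hAm ht, Matrix.mul_assoc (Am s)]

/-- If `A` is invertible and `AΓA⁻¹ ⊆ Γ`, then
`Q̃_[s,t](AγA⁻¹) = A_[s] Q̃_[s,t](γ) A_[t]⁻¹` for every `γ = (b,l) ∈ Γ`. -/
theorem Qtilde_conj (d s t : ℕ) (ht : t ≤ s)
    (G : Finset (Matrix (Fin d) (Fin d) ℝ)) (Λ : Set (Fin d → ℝ))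
    (hcr : IsSplittingCrystal d G Λ)
    (Q : (s : ℕ) → (t : ℕ) → (Fin d → ℝ) → Matrix (Sym (Fin d) s) (Sym (Fin d) t) ℂ)
    (hQ : IsQfam d Q)
    (A : Matrix (Fin d) (Fin d) ℝ) (hA : IsUnit A.det)
    (hconj : ∀ γ ∈ crystSet G Λ, crystConj A γ ∈ crystSet G Λ)
    (b : Matrix (Fin d) (Fin d) ℝ) (l : Fin d → ℝ)
    (hγ : ((b, l) : CrystElem d) ∈ crystSet G Λ)
    (bm b'm : (u : ℕ) → Matrix (Sym (Fin d) u) (Sym (Fin d) u) ℂ)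
    (hbm : ∀ u, IsMonMat d u b (bm u))
    (hb'm : ∀ u, IsMonMat d u (crystConj A (b, l)).1 (b'm u))
    (Am : (u : ℕ) → Matrix (Sym (Fin d) u) (Sym (Fin d) u) ℂ)
    (hAm : ∀ u, IsMonMat d u A (Am u)) :
    Q s t (crystConj A (b, l)).2 * (b'm t)⁻¹ =
      Am s * (Q s t l * (bm t)⁻¹) * (Am t)⁻¹ :=
  Qtilde_conj_general d s t ht G Λ hcr Q hQ A hA b l hγ bm b'm hbm hb'm Am hAm
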